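/- arXiv:1702.00901 — 9 statements merged into one kernel-verified Lean document; each statement's English description precedes it below -/
import Mathlib

section
/- For every integer k ≥ 2, one has π/2^{k+1} = arctan(√(2 − a_{k−1}) / a_k). -/
open Real Filter Topology

theorem viete_like_pi_formula (a : ℕ → ℝ)
    (ha1 : a 1 = Real.sqrt 2)
    (ha : ∀ k ≥ 1, a (k + 1) = Real.sqrt (2 + a k)) :
    ∀ k ≥ 2, π / 2 ^ (k + 1) = Real.arctan (Real.sqrt (2 - a (k - 1)) / a k) := by
  have hhalf : ∀ n : ℕ, 0 < Real.cos (π / 2 ^ (n + 2)) := by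
    intro n
    apply Real.cos_pos_of_mem_Ioo
    have hp := Real.pi_pos
    have h2 : (2:ℝ) < 2 ^ (n + 2) := by
      have h : (2:ℝ) ^ 1 < 2 ^ (n + 2) := by
        apply pow_lt_pow_right₀ (by norm_num) (by omega)
      simpa using h
    constructor
    · have h : 0 < π / 2 ^ (n + 2) := by positivity
      linarith
    · exact div_lt_div_of_pos_left hp (by norm_num) h2
  have hdouble : ∀ n : ℕ, 2 * (π / 2 ^ (n + 2)) = π / 2 ^ (n + 1) := by
    intro n
    rw [pow_succ]
    ring
  have key : ∀ k, 1 ≤ k → a k = 2 * Real.cos (π / 2 ^ (k + 1)) := by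
    intro k hk
    induction k with
    | zero => omega
    | succ n ih =>
      rcases Nat.lt_or_ge n 1 with h | hn
      · have hn0 : n = 0 := by omega
        subst hn0
        rw [ha1, show π / 2 ^ (0 + 1 + 1) = π / 4 by norm_num, Real.cos_pi_div_four]
        ring
      · rw [ha n hn, ih hn]
        have hcos : Real.cos (π / 2 ^ (n + 1 + 1)) ^ 2
            = 1 / 2 + Real.cos (π / 2 ^ (n + 1)) / 2 := by
          rw [Real.cos_sq, hdouble n]
        have hpos : 0 < Real.cos (π / 2 ^ (n + 1 + 1)) := by
          have h : n - 1 + 2 + 1 = n + 1 + 1 := by omega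
          simpa [h] using hhalf (n - 1 + 1)
        have heq : 2 + 2 * Real.cos (π / 2 ^ (n + 1))
            = (2 * Real.cos (π / 2 ^ (n + 1 + 1))) ^ 2 := by
          nlinarith [hcos]
        rw [heq, Real.sqrt_sq (by positivity)]
  intro k hk
  have hk1 : 1 ≤ k - 1 := by omega
  have hkk : k - 1 + 1 = k := by omega
  have ha1' : a (k - 1) = 2 * Real.cos (π / 2 ^ k) := by
    rw [key (k - 1) hk1, hkk]
  have hak : a k = 2 * Real.cos (π / 2 ^ (k + 1)) := key k (by omega)
  have hsinpos : 0 < Real.sin (π / 2 ^ (k + 1)) := by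
    apply Real.sin_pos_of_pos_of_lt_pi
    · positivity
    · have h1 : (1:ℝ) < 2 ^ (k + 1) := by
        calc (1:ℝ) = 2 ^ 0 := by norm_num
          _ < 2 ^ (k + 1) := by apply pow_lt_pow_right₀ (by norm_num) (by omega)
      calc π / 2 ^ (k + 1) < π / 1 :=
            div_lt_div_of_pos_left Real.pi_pos (by norm_num) h1
        _ = π := by ring
  have hcospos : 0 < Real.cos (π / 2 ^ (k + 1)) := by
    have h : k - 1 + 2 = k + 1 := by omega
    simpa [h] using hhalf (k - 1)
  have hd : 2 * (π / 2 ^ (k + 1)) = π / 2 ^ k := by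
    rw [pow_succ]; ring
  have hcos2 : Real.cos (π / 2 ^ (k + 1)) ^ 2 = 1 / 2 + Real.cos (π / 2 ^ k) / 2 := by
    rw [Real.cos_sq, hd]
  have hsin2 : Real.sin (π / 2 ^ (k + 1)) ^ 2 = 1 / 2 - Real.cos (π / 2 ^ k) / 2 := by
    have hpyth := Real.sin_sq_add_cos_sq (π / 2 ^ (k + 1))
    nlinarith [hcos2]
  have hsqrt : Real.sqrt (2 - a (k - 1)) = 2 * Real.sin (π / 2 ^ (k + 1)) := by
    rw [ha1']
    have heq : 2 - 2 * Real.cos (π / 2 ^ k) = (2 * Real.sin (π / 2 ^ (k + 1))) ^ 2 := by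
      nlinarith [hsin2]
    rw [heq, Real.sqrt_sq (by positivity)]
  rw [hsqrt, hak]
  have htan : 2 * Real.sin (π / 2 ^ (k + 1)) / (2 * Real.cos (π / 2 ^ (k + 1)))
      = Real.tan (π / 2 ^ (k + 1)) := by
    rw [Real.tan_eq_sin_div_cos]
    field_simp
  rw [htan, Real.arctan_tan]
  · have h : 0 < π / 2 ^ (k + 1) := by positivity
    linarith [Real.pi_pos]
  · have h2 : (2:ℝ) < 2 ^ (k + 1) := by
      calc (2:ℝ) = 2 ^ 1 := by norm_num
        _ < 2 ^ (k + 1) := by apply pow_lt_pow_right₀ (by norm_num) (by omega)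
    exact div_lt_div_of_pos_left Real.pi_pos (by norm_num) h2
end

section
/- For every integer k ≥ 1, arctan(b_k) = π/2^{k+2}; equivalently, b_k = tan(π/2^{k+2}). -/
open Real Filter Topology

/-
The recursion is that of Mathlib's `sqrtTwoAddSeries 0`, so `a k = 2 cos (π / 2 ^ (k + 1))`.
The half-angle formulas then give `√(2 - a k) = 2 sin θ` and `a (k + 1) = 2 cos θ` for
`θ = π / 2 ^ (k + 2)`, hence `b k = tan θ`; as `0 < θ < π / 2`, also `arctan (b k) = θ`.
-/

namespace Real

theorem eq_sqrtTwoAddSeries_of_rec {a : ℕ → ℝ} (ha1 : a 1 = √2)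
    (ha : ∀ k ≥ 1, a (k + 1) = √(2 + a k)) : ∀ k ≥ 1, a k = sqrtTwoAddSeries 0 k := by
  intro k hk
  induction k, hk using Nat.le_induction with
  | base => simp [ha1]
  | succ k hk ih => rw [ha k hk, ih, sqrtTwoAddSeries]

theorem tan_pi_over_two_pow_succ (n : ℕ) :
    tan (π / 2 ^ (n + 2)) = √(2 - sqrtTwoAddSeries 0 n) / sqrtTwoAddSeries 0 (n + 1) := by
  rw [tan_eq_sin_div_cos, sin_pi_over_two_pow_succ, cos_pi_over_two_pow (n + 1)]
  exact div_div_div_cancel_right₀ two_ne_zero _ _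

theorem pi_over_two_pow_succ_mem_Ioo (n : ℕ) : π / 2 ^ (n + 2) ∈ Set.Ioo (-(π / 2)) (π / 2) := by
  have hpos : 0 < π / 2 ^ (n + 2) := by positivity
  refine ⟨by linarith [pi_pos], div_lt_div_of_pos_left pi_pos two_pos ?_⟩
  calc (2 : ℝ) = 2 ^ 1 := (pow_one 2).symm
    _ < 2 ^ (n + 2) := pow_lt_pow_right₀ one_lt_two (by omega)

end Real

theorem arctan_b_eq (a : ℕ → ℝ)
    (ha1 : a 1 = Real.sqrt 2)
    (ha : ∀ k ≥ 1, a (k + 1) = Real.sqrt (2 + a k))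
    (b : ℕ → ℝ)
    (hb : ∀ k ≥ 1, b k = Real.sqrt (2 - a k) / a (k + 1)) :
    ∀ k ≥ 1, Real.arctan (b k) = π / 2 ^ (k + 2) ∧ b k = Real.tan (π / 2 ^ (k + 2)) := by
  intro k hk
  have hbk : b k = tan (π / 2 ^ (k + 2)) := by
    rw [hb k hk, tan_pi_over_two_pow_succ, eq_sqrtTwoAddSeries_of_rec ha1 ha k hk,
      eq_sqrtTwoAddSeries_of_rec ha1 ha (k + 1) (by omega)]
  obtain ⟨hlo, hhi⟩ := pi_over_two_pow_succ_mem_Ioo k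
  exact ⟨by rw [hbk, arctan_tan hlo hhi], hbk⟩
end

section
/- The sequence b_k is positive and strictly decreasing, and b_k → 0 as k → ∞. -/
open Real Filter Topology

theorem b_pos_strict_anti_tendsto_zero (a : ℕ → ℝ)
    (ha1 : a 1 = Real.sqrt 2)
    (ha : ∀ k ≥ 1, a (k + 1) = Real.sqrt (2 + a k))
    (b : ℕ → ℝ)
    (hb : ∀ k ≥ 1, b k = Real.sqrt (2 - a k) / a (k + 1)) :
    (∀ k ≥ 1, 0 < b k) ∧ (∀ k ≥ 1, b (k + 1) < b k) ∧
      Tendsto b atTop (𝓝 0) := by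
  have s2lt2 : Real.sqrt 2 < 2 := by
    nlinarith [Real.sq_sqrt (by norm_num : (2:ℝ) ≥ 0), Real.sqrt_nonneg 2]
  have s2pos : (0:ℝ) < Real.sqrt 2 := Real.sqrt_pos.mpr (by norm_num)
  -- bounds: √2 ≤ a k < 2 for k ≥ 1
  have hbd : ∀ k ≥ 1, Real.sqrt 2 ≤ a k ∧ a k < 2 := by
    intro k hk
    induction k with
    | zero => omega
    | succ n ih =>
      rcases Nat.eq_or_lt_of_le hk with h | h
      · have : a (n+1) = Real.sqrt 2 := by rw [← h, ha1]
        rw [this]; exact ⟨le_refl _, s2lt2⟩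
      · have hn : n ≥ 1 := by omega
        obtain ⟨h1, h2⟩ := ih hn
        rw [ha n hn]
        constructor
        · apply Real.le_sqrt' s2pos |>.mpr
          nlinarith [Real.sq_sqrt (by norm_num : (2:ℝ) ≥ 0)]
        · have : (2 : ℝ) + a n < 4 := by linarith
          calc Real.sqrt (2 + a n) < Real.sqrt 4 := by
                apply Real.sqrt_lt_sqrt (by nlinarith) this
            _ = 2 := by
                rw [show (4:ℝ) = 2^2 by norm_num, Real.sqrt_sq (by norm_num)]
  have hapos : ∀ k ≥ 1, 0 < a k := fun k hk => lt_of_lt_of_le s2pos (hbd k hk).1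
  have hsq : ∀ k ≥ 1, a (k+1) ^ 2 = 2 + a k := by
    intro k hk
    rw [ha k hk, Real.sq_sqrt]
    have := (hbd k hk).1
    nlinarith
  have h2sub : ∀ k ≥ 1, 0 < 2 - a k := fun k hk => by linarith [(hbd k hk).2]
  -- positivity
  have hpos : ∀ k ≥ 1, 0 < b k := by
    intro k hk
    rw [hb k hk]
    exact div_pos (Real.sqrt_pos.mpr (h2sub k hk)) (hapos (k+1) (by omega))
  refine ⟨hpos, ?_, ?_⟩
  -- key factorization: √(2 - a k) = √(2 - a (k+1)) * a (k+2)
  have hfact : ∀ k ≥ 1, Real.sqrt (2 - a k) = Real.sqrt (2 - a (k+1)) * a (k+2) := by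
    intro k hk
    have h1 : (2 - a k) = (2 - a (k+1)) * (a (k+2))^2 := by
      have e1 := hsq k hk
      have e2 := hsq (k+1) (by omega)
      nlinarith
    rw [h1, Real.sqrt_mul (le_of_lt (h2sub (k+1) (by omega))),
      Real.sqrt_sq (le_of_lt (hapos (k+2) (by omega)))]
  · intro k hk
    rw [hb k hk, hb (k+1) (by omega), hfact k hk]
    rw [div_lt_div_iff₀ (hapos (k+2) (by omega)) (hapos (k+1) (by omega))]
    have hs : 0 < Real.sqrt (2 - a (k+1)) := Real.sqrt_pos.mpr (h2sub (k+1) (by omega))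
    have h2 : a (k+1) < (a (k+2))^2 := by
      rw [hsq (k+1) (by omega)]; linarith
    nlinarith [hapos (k+2) (by omega)]
  · -- decay: 2 - a k ≤ (1/2)^(k-1)
    have hdecay : ∀ k ≥ 1, 2 - a k ≤ (1/2 : ℝ)^(k-1) := by
      intro k hk
      induction k with
      | zero => omega
      | succ n ih =>
        rcases Nat.eq_or_lt_of_le hk with h | h
        · have h0 : a (n+1) = Real.sqrt 2 := by rw [← h, ha1]
          have h1 : (n+1)-1 = 0 := by omega
          rw [h0, h1, pow_zero]
          nlinarith [Real.sq_sqrt (by norm_num : (2:ℝ) ≥ 0), Real.sqrt_nonneg 2]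
        · have hn : n ≥ 1 := by omega
          have e := hsq n hn
          have h1 : 2 - a (n+1) = (2 - a n) / (2 + a (n+1)) := by
            have hp : (0:ℝ) < 2 + a (n+1) := by linarith [hapos (n+1) (by omega)]
            rw [eq_div_iff (ne_of_gt hp)]
            nlinarith
          have h2 : (2:ℝ) + a (n+1) ≥ 2 := by linarith [hapos (n+1) (by omega)]
          have h3 : 2 - a (n+1) ≤ (2 - a n) / 2 := by
            rw [h1]
            apply div_le_div_of_nonneg_left (le_of_lt (h2sub n hn)) (by norm_num) h2
          have h4 : (2 - a n)/2 ≤ (1/2:ℝ)^(n-1) / 2 := by linarith [ih hn]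
          have h5 : (1/2:ℝ)^(n-1)/2 = (1/2:ℝ)^((n+1)-1) := by
            rw [show (n+1)-1 = (n-1)+1 by omega, pow_succ]
            ring
          linarith
    -- b k ≤ √((1/2)^(k-1))
    have hub : ∀ k ≥ 1, b k ≤ Real.sqrt ((1/2:ℝ)^(k-1)) := by
      intro k hk
      rw [hb k hk]
      have ha1le : 1 ≤ a (k+1) := by
        have := (hbd (k+1) (by omega)).1
        nlinarith [Real.sq_sqrt (by norm_num : (2:ℝ) ≥ 0), Real.sqrt_nonneg 2]
      calc Real.sqrt (2 - a k) / a (k+1) ≤ Real.sqrt (2 - a k) / 1 := by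
            apply div_le_div_of_nonneg_left (Real.sqrt_nonneg _) (by norm_num) ha1le
        _ = Real.sqrt (2 - a k) := by ring
        _ ≤ Real.sqrt ((1/2:ℝ)^(k-1)) := Real.sqrt_le_sqrt (hdecay k hk)
    have htend : Tendsto (fun k : ℕ => Real.sqrt ((1/2:ℝ)^(k-1))) atTop (𝓝 0) := by
      have h1 : Tendsto (fun k : ℕ => ((1/2:ℝ)^(k-1))) atTop (𝓝 0) := by
        have := tendsto_pow_atTop_nhds_zero_of_lt_one (by norm_num : (0:ℝ) ≤ 1/2)
          (by norm_num : (1/2:ℝ) < 1)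
        exact this.comp (tendsto_sub_atTop_nat 1)
      have h2 := (Real.continuous_sqrt.tendsto 0).comp h1
      rw [Real.sqrt_zero] at h2
      exact h2
    apply squeeze_zero' ?_ ?_ htend
    · filter_upwards [eventually_ge_atTop 1] with k hk
      exact le_of_lt (hpos k hk)
    · filter_upwards [eventually_ge_atTop 1] with k hk
      exact hub k hk
end

section
/- The sequence of consecutive ratios r_k = b_{k+1}/b_k is strictly increasing in k and satisfies r_k < 1/2 for every k ≥ 1. -/
open Real Filter Topology

theorem b_ratio_strict_mono_lt_half (a : ℕ → ℝ)
    (ha1 : a 1 = Real.sqrt 2)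
    (ha : ∀ k ≥ 1, a (k + 1) = Real.sqrt (2 + a k))
    (b : ℕ → ℝ)
    (hb : ∀ k ≥ 1, b k = Real.sqrt (2 - a k) / a (k + 1)) :
    (∀ k ≥ 1, b (k + 1) / b k < b (k + 2) / b (k + 1)) ∧
      (∀ k ≥ 1, b (k + 1) / b k < 1 / 2) := by
  have hbound : ∀ k ≥ 1, 0 < a k ∧ a k < 2 := by
    intro k hk
    induction k with
    | zero => omega
    | succ n ih =>
      rcases Nat.lt_or_ge 1 (n + 1) with h | h
      · have hn : n ≥ 1 := by omega
        obtain ⟨h0, h2⟩ := ih hn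
        rw [ha n hn]
        refine ⟨Real.sqrt_pos.mpr (by linarith), ?_⟩
        have h4 : Real.sqrt (2 + a n) < Real.sqrt 4 :=
          Real.sqrt_lt_sqrt (by linarith) (by linarith)
        have : Real.sqrt 4 = 2 := by
          rw [show (4:ℝ) = 2^2 by norm_num, Real.sqrt_sq (by norm_num)]
        linarith
      · have h1 : n + 1 = 1 := by omega
        rw [h1, ha1]
        have hs : Real.sqrt 2 ^ 2 = 2 := Real.sq_sqrt (by norm_num)
        have hpos : (0:ℝ) < Real.sqrt 2 := Real.sqrt_pos.mpr (by norm_num)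
        exact ⟨hpos, by nlinarith⟩
  have hmono : ∀ k ≥ 1, a k < a (k + 1) := by
    intro k hk
    obtain ⟨h0, h2⟩ := hbound k hk
    rw [ha k hk]
    exact (Real.lt_sqrt h0.le).mpr (by nlinarith)
  have hratio : ∀ k ≥ 1, b (k + 1) / b k = a (k + 1) / (2 + a (k + 1)) := by
    intro k hk
    have hk1 : k + 1 ≥ 1 := by omega
    obtain ⟨h0k, h2k⟩ := hbound k hk
    obtain ⟨h0k1, h2k1⟩ := hbound (k + 1) hk1
    obtain ⟨h0k2, h2k2⟩ := hbound (k + 2) (by omega)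
    have hsq1 : a (k + 1) ^ 2 = 2 + a k := by
      rw [ha k hk]; exact Real.sq_sqrt (by linarith)
    have hsq2 : a (k + 2) ^ 2 = 2 + a (k + 1) := by
      rw [show k + 2 = (k+1) + 1 from rfl, ha (k + 1) hk1]
      exact Real.sq_sqrt (by linarith)
    have hfac : Real.sqrt (2 - a k) = Real.sqrt (2 - a (k + 1)) * a (k + 2) := by
      have h1 : (2 - a k) = (2 - a (k + 1)) * (2 + a (k + 1)) := by nlinarith
      rw [h1, Real.sqrt_mul (by linarith)]
      congr 1
      rw [show k + 2 = (k+1) + 1 from rfl, ha (k + 1) hk1]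
    have hs : (0:ℝ) < Real.sqrt (2 - a (k + 1)) := Real.sqrt_pos.mpr (by linarith)
    rw [hb (k + 1) hk1, hb k hk, hfac, ← hsq2]
    field_simp
  have hincr : ∀ k ≥ 1, b (k + 1) / b k < b (k + 2) / b (k + 1) := by
    intro k hk
    rw [hratio k hk, hratio (k + 1) (by omega)]
    obtain ⟨h0k1, h2k1⟩ := hbound (k + 1) (by omega)
    obtain ⟨h0k2, h2k2⟩ := hbound (k + 2) (by omega)
    have hm := hmono (k + 1) (by omega)
    rw [div_lt_div_iff₀ (by linarith) (by linarith)]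
    nlinarith
  refine ⟨hincr, ?_⟩
  intro k hk
  rw [hratio k hk]
  obtain ⟨h0k1, h2k1⟩ := hbound (k + 1) (by omega)
  rw [div_lt_div_iff₀ (by linarith) (by norm_num)]
  linarith
end

section
/- For every integer ℓ ≥ 2, b_ℓ < b_1 / 2^{ℓ−1}; that is, the sequence b decays strictly faster than the geometric progression with first term b_1 and common ratio 1/2. -/
open Real Filter Topology

theorem b_lt_geometric (a : ℕ → ℝ)
    (ha1 : a 1 = Real.sqrt 2)
    (ha : ∀ k ≥ 1, a (k + 1) = Real.sqrt (2 + a k))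
    (b : ℕ → ℝ)
    (hb : ∀ k ≥ 1, b k = Real.sqrt (2 - a k) / a (k + 1)) :
    ∀ l ≥ 2, b l < b 1 / 2 ^ (l - 1) := by
  have pos : ∀ k ≥ 1, 0 < a k ∧ a k < 2 := by
    intro k hk
    refine Nat.le_induction ?_ ?_ k hk
    · rw [ha1]
      constructor
      · exact Real.sqrt_pos.mpr (by norm_num)
      · nlinarith [Real.sq_sqrt (by norm_num : (0:ℝ) ≤ 2), Real.sqrt_nonneg 2]
    · intro n hn ih
      rw [ha n hn]
      constructor
      · exact Real.sqrt_pos.mpr (by linarith [ih.1])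
      · exact (Real.sqrt_lt' (by norm_num)).mpr (by nlinarith [ih.2])
  have hstep : ∀ k ≥ 1, b (k + 1) < b k / 2 := by
    intro k hk
    obtain ⟨hx0, hx2⟩ := pos k hk
    obtain ⟨hy0, hy2⟩ := pos (k + 1) (by omega)
    obtain ⟨hz0, hz2⟩ := pos (k + 2) (by omega)
    have hy : a (k + 1) = Real.sqrt (2 + a k) := ha k hk
    have hz : a (k + 2) = Real.sqrt (2 + a (k + 1)) := ha (k + 1) (by omega)
    have hy2' : a (k + 1) ^ 2 = 2 + a k := by
      rw [hy]; exact Real.sq_sqrt (by linarith)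
    have hz2' : a (k + 2) ^ 2 = 2 + a (k + 1) := by
      rw [hz]; exact Real.sq_sqrt (by linarith)
    have key : Real.sqrt (2 - a (k + 1)) = Real.sqrt (2 - a k) / a (k + 2) := by
      rw [eq_div_iff (ne_of_gt hz0), hz, ← Real.sqrt_mul (by linarith)]
      congr 1
      nlinarith [hy2']
    rw [hb (k + 1) (by omega), hb k hk, key]
    have hs : 0 < Real.sqrt (2 - a k) := Real.sqrt_pos.mpr (by linarith)
    rw [div_div, div_div]
    apply div_lt_div_of_pos_left hs (by positivity)
    nlinarith [hz2']
  intro l hl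
  refine Nat.le_induction ?_ ?_ l hl
  · have h := hstep 1 le_rfl
    norm_num at h ⊢
    exact h
  · intro n hn ih
    have h := hstep n (by omega)
    rw [show (n + 1) - 1 = (n - 1) + 1 from by omega, pow_succ, ← div_div]
    linarith
end

section
/- For every integer k ≥ 1, the product c_k · b_{k+1} is strictly less than 1 (so the arctangent addition identity arctan x + arctan y = arctan((x+y)/(1−xy)) is valid at each step of the recurrence defining c). -/
open Real Filter Topology

private lemma tan_mul_tan_lt_one {x y : ℝ} (hx : 0 ≤ x) (hy : 0 ≤ y)
    (hxy : x + y < π / 2) : Real.tan x * Real.tan y < 1 := by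
  have hx2 : x < π / 2 := by linarith
  have hy2 : y < π / 2 := by linarith
  have hcx : 0 < Real.cos x := Real.cos_pos_of_mem_Ioo ⟨by linarith [Real.pi_pos], hx2⟩
  have hcy : 0 < Real.cos y := Real.cos_pos_of_mem_Ioo ⟨by linarith [Real.pi_pos], hy2⟩
  have hcxy : 0 < Real.cos (x + y) :=
    Real.cos_pos_of_mem_Ioo ⟨by linarith [Real.pi_pos], hxy⟩
  rw [Real.tan_eq_sin_div_cos, Real.tan_eq_sin_div_cos, div_mul_div_comm,
    div_lt_one (by positivity)]
  nlinarith [Real.cos_add x y]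

private lemma tan_add_formula {x y : ℝ} (hx : Real.cos x ≠ 0) (hy : Real.cos y ≠ 0)
    (hxy : Real.cos (x + y) ≠ 0) :
    Real.tan (x + y) = (Real.tan x + Real.tan y) / (1 - Real.tan x * Real.tan y) := by
  rw [Real.tan_eq_sin_div_cos, Real.tan_eq_sin_div_cos, Real.tan_eq_sin_div_cos,
    Real.sin_add, Real.cos_add] at *
  have h : Real.cos x * Real.cos y - Real.sin x * Real.sin y ≠ 0 := hxy
  field_simp

theorem c_mul_b_lt_one (a : ℕ → ℝ)
    (ha1 : a 1 = Real.sqrt 2)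
    (ha : ∀ k ≥ 1, a (k + 1) = Real.sqrt (2 + a k))
    (b : ℕ → ℝ)
    (hb : ∀ k ≥ 1, b k = Real.sqrt (2 - a k) / a (k + 1))
    (c : ℕ → ℝ)
    (hc1 : c 1 = b 1)
    (hc : ∀ k ≥ 1, c (k + 1) = (c k + b (k + 1)) / (1 - c k * b (k + 1))) :
    ∀ k ≥ 1, c k * b (k + 1) < 1 := by
  have pi_pos := Real.pi_pos
  -- a k = 2 cos (π / 2 ^ (k+1))
  have haS : ∀ k ≥ 1, a k = sqrtTwoAddSeries 0 k := by
    intro k hk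
    induction k with
    | zero => omega
    | succ n ih =>
      rcases Nat.eq_or_lt_of_le hk with h | h
      · simp only [← h]
        rw [ha1]; simp [sqrtTwoAddSeries]
      · have hn : 1 ≤ n := by omega
        rw [ha n hn, ih hn, sqrtTwoAddSeries]
  have ha' : ∀ k ≥ 1, a k = 2 * Real.cos (π / 2 ^ (k + 1)) := by
    intro k hk
    rcases Nat.exists_eq_add_of_le hk with ⟨m, rfl⟩
    rw [haS _ hk, cos_pi_over_two_pow]
    ring
  -- angle bounds
  have hangle : ∀ k : ℕ, 1 ≤ k → π / 2 ^ (k + 2) ≤ π / 8 := by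
    intro k hk
    apply div_le_div_of_nonneg_left pi_pos.le (by norm_num)
    calc (8:ℝ) = 2 ^ 3 := by norm_num
    _ ≤ 2 ^ (k + 2) := by
        apply pow_le_pow_right₀ one_le_two; omega
  have hangle_pos : ∀ k : ℕ, (0:ℝ) < π / 2 ^ (k + 2) := by
    intro k; positivity
  -- b k = tan (π / 2 ^ (k+2))
  have hb' : ∀ k ≥ 1, b k = Real.tan (π / 2 ^ (k + 2)) := by
    intro k hk
    have h1 : Real.sqrt (2 - a k) = 2 * Real.sin (π / 2 ^ (k + 2)) := by
      rw [haS _ hk, sin_pi_over_two_pow_succ]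
      ring
    rw [hb k hk, h1, ha' (k + 1) (by omega), Real.tan_eq_sin_div_cos]
    rw [mul_div_mul_left _ _ (two_ne_zero)]
  -- c k = tan (π/4 - π / 2 ^ (k+2))
  have hc' : ∀ k ≥ 1, c k = Real.tan (π / 4 - π / 2 ^ (k + 2)) := by
    intro k hk
    induction k with
    | zero => omega
    | succ n ih =>
      rcases Nat.eq_or_lt_of_le hk with h | h
      · simp only [← h]
        rw [hc1, hb' 1 le_rfl]
        congr 1
        rw [show (2:ℝ) ^ (1 + 2) = 8 by norm_num]
        ring
      · have hn : 1 ≤ n := by omega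
        show c (n + 1) = Real.tan (π / 4 - π / 2 ^ (n + 3))
        set S := π / 4 - π / 2 ^ (n + 2) with hS
        set t := π / 2 ^ (n + 3) with ht
        have hbn : b (n + 1) = Real.tan t := by
          rw [hb' (n + 1) (by omega)]
        have hsum : S + t = π / 4 - t := by
          rw [hS, ht]
          have : π / 2 ^ (n + 2) = π / 2 ^ (n + 3) + π / 2 ^ (n + 3) := by
            rw [← two_mul, pow_succ]
            field_simp
            ring
          rw [this]; ring
        have hSnn : 0 ≤ S := by
          have := hangle n hn
          rw [hS]; linarith
        have hSlt : S < π / 4 := by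
          have := hangle_pos n; rw [hS]; linarith
        have htpos : 0 < t := hangle_pos (n + 1)
        have htle : t ≤ π / 8 := hangle (n + 1) (by omega)
        have hcosS : Real.cos S ≠ 0 :=
          ne_of_gt (Real.cos_pos_of_mem_Ioo ⟨by linarith, by linarith⟩)
        have hcost : Real.cos t ≠ 0 :=
          ne_of_gt (Real.cos_pos_of_mem_Ioo ⟨by linarith, by linarith⟩)
        have hcosSt : Real.cos (S + t) ≠ 0 := by
          apply ne_of_gt
          apply Real.cos_pos_of_mem_Ioo
          constructor <;> [linarith; linarith]
        rw [hc n hn, ih hn, hbn, ← tan_add_formula hcosS hcost hcosSt, hsum]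
  -- conclusion
  intro k hk
  rw [hc' k hk, hb' (k + 1) (by omega)]
  apply tan_mul_tan_lt_one
  · have := hangle k hk; linarith
  · exact (hangle_pos (k + 1)).le
  · have h1 := hangle_pos (k + 1)
    have h2 := hangle (k + 1) (by omega)
    have h3 := hangle_pos k
    linarith
end

section
/- For every integer k ≥ 1, arctan(1) = arctan(c_k) + ∑_{ℓ=k+1}^{∞} arctan(b_ℓ), where the series on the right converges. -/
open Real Filter Topology

theorem arctan_one_eq_arctan_c_add_tail (a : ℕ → ℝ)
    (ha1 : a 1 = Real.sqrt 2)
    (ha : ∀ k ≥ 1, a (k + 1) = Real.sqrt (2 + a k))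
    (b : ℕ → ℝ)
    (hb : ∀ k ≥ 1, b k = Real.sqrt (2 - a k) / a (k + 1))
    (c : ℕ → ℝ)
    (hc1 : c 1 = b 1)
    (hc : ∀ k ≥ 1, c (k + 1) = (c k + b (k + 1)) / (1 - c k * b (k + 1))) :
    ∀ k ≥ 1, ∃ S : ℝ, HasSum (fun l : ℕ => Real.arctan (b (k + 1 + l))) S ∧
      Real.arctan 1 = Real.arctan (c k) + S := by
  have pi_pos := Real.pi_pos
  -- angle bounds
  have hang : ∀ n : ℕ, 2 ≤ n → 0 < π / 2 ^ n ∧ π / 2 ^ n < π / 2 := by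
    intro n hn
    constructor
    · positivity
    · apply div_lt_div_of_pos_left pi_pos (by norm_num)
      calc (2:ℝ) < 2 ^ 2 := by norm_num
        _ ≤ 2 ^ n := by
          apply pow_le_pow_right₀ (by norm_num) hn
  have hsmall : ∀ n : ℕ, 3 ≤ n → π / 2 ^ n < π / 4 := by
    intro n hn
    apply div_lt_div_of_pos_left pi_pos (by norm_num)
    calc (4:ℝ) < 2 ^ 3 := by norm_num
      _ ≤ 2 ^ n := by apply pow_le_pow_right₀ (by norm_num) hn
  have hhalf : ∀ n : ℕ, π / 2 ^ (n + 1) = 2 * (π / 2 ^ (n + 2)) := by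
    intro n
    rw [pow_succ (2:ℝ) (n+1)]
    field_simp
  -- a k = 2 cos (π / 2^(k+1))
  have hA : ∀ k : ℕ, 1 ≤ k → a k = 2 * Real.cos (π / 2 ^ (k + 1)) := by
    intro k hk
    induction k, hk using Nat.le_induction with
    | base =>
      rw [ha1, show (2:ℝ) ^ (1 + 1) = 4 by norm_num, Real.cos_pi_div_four]
      ring
    | succ k hk ih =>
      have hb2 := (hang (k+2) (by omega))
      have hcos : 0 < Real.cos (π / 2 ^ (k + 2)) :=
        Real.cos_pos_of_mem_Ioo ⟨by linarith [hb2.1], hb2.2⟩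
      rw [ha k hk, ih, hhalf k, Real.cos_two_mul]
      rw [show (2:ℝ) + (2 * (2 * Real.cos (π / 2 ^ (k+2)) ^ 2 - 1))
          = (2 * Real.cos (π / 2 ^ (k+2))) ^ 2 by ring]
      rw [Real.sqrt_sq (by positivity)]
  -- b k = tan (π / 2^(k+2))
  have hB : ∀ k : ℕ, 1 ≤ k → Real.arctan (b k) = π / 2 ^ (k + 2) := by
    intro k hk
    have hb2 := hang (k+2) (by omega)
    have hcos : 0 < Real.cos (π / 2 ^ (k + 2)) :=
      Real.cos_pos_of_mem_Ioo ⟨by linarith [hb2.1], hb2.2⟩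
    have hsin : 0 ≤ Real.sin (π / 2 ^ (k + 2)) :=
      Real.sin_nonneg_of_nonneg_of_le_pi (le_of_lt hb2.1)
        (by linarith [hb2.2, pi_pos])
    have hbk : b k = Real.tan (π / 2 ^ (k + 2)) := by
      rw [hb k hk, hA k hk, ha k hk, hA k hk, hhalf k, Real.cos_two_mul]
      rw [show (2:ℝ) + (2 * (2 * Real.cos (π / 2 ^ (k+2)) ^ 2 - 1))
          = (2 * Real.cos (π / 2 ^ (k+2))) ^ 2 by ring]
      rw [Real.sqrt_sq (by positivity)]
      rw [show (2:ℝ) - (2 * (2 * Real.cos (π / 2 ^ (k+2)) ^ 2 - 1))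
          = (2 * Real.sin (π / 2 ^ (k+2))) ^ 2 by
        have := Real.sin_sq_add_cos_sq (π / 2 ^ (k+2)); nlinarith]
      rw [Real.sqrt_sq (by positivity), Real.tan_eq_sin_div_cos]
      field_simp
    rw [hbk, Real.arctan_tan (by linarith [hb2.1]) hb2.2
      ]
  -- arctan (c k) = π/4 - π/2^(k+2)
  have hCb : ∀ k : ℕ, 1 ≤ k → 0 ≤ c k ∧ c k < 1 ∧
      Real.arctan (c k) = π / 4 - π / 2 ^ (k + 2) := by
    intro k hk
    induction k, hk using Nat.le_induction with
    | base =>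
      have h1 := hB 1 le_rfl
      have hb2 := hang 3 (by omega)
      have harc : Real.arctan (c 1) = π / 2 ^ 3 := by rw [hc1]; exact h1
      have h0 : (0:ℝ) ≤ c 1 := by
        have : Real.arctan 0 ≤ Real.arctan (c 1) := by
          rw [Real.arctan_zero, harc]; positivity
        exact Real.arctan_strictMono.le_iff_le.mp this
      have h1' : c 1 < 1 := by
        have : Real.arctan (c 1) < Real.arctan 1 := by
          rw [harc, Real.arctan_one]
          exact hsmall 3 le_rfl
        exact Real.arctan_strictMono.lt_iff_lt.mp this
      refine ⟨h0, h1', ?_⟩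
      rw [harc]; norm_num; ring
    | succ k hk ih =>
      obtain ⟨h0, h1, harc⟩ := ih
      have hbk := hB (k+1) (by omega)
      have hb2 := hang (k+3) (by omega)
      have hbnn : 0 ≤ b (k+1) := by
        have : Real.arctan 0 ≤ Real.arctan (b (k+1)) := by
          rw [Real.arctan_zero, hbk]; positivity
        exact Real.arctan_strictMono.le_iff_le.mp this
      have hblt : b (k+1) < 1 := by
        have : Real.arctan (b (k+1)) < Real.arctan 1 := by
          rw [hbk, Real.arctan_one]
          exact hsmall (k+1+2) (by omega)
        exact Real.arctan_strictMono.lt_iff_lt.mp this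
      have hprod : c k * b (k+1) < 1 := by nlinarith
      have hadd := Real.arctan_add hprod
      have hck1 : c (k+1) = (c k + b (k+1)) / (1 - c k * b (k+1)) := hc k hk
      have harc' : Real.arctan (c (k+1)) = π / 4 - π / 2 ^ (k + 3) := by
        rw [hck1, ← hadd, harc, hbk]
        have : π / 2 ^ (k + 2) = 2 * (π / 2 ^ (k + 3)) := hhalf (k+1)
        rw [this]; ring
      refine ⟨?_, ?_, harc'⟩
      · have h4 : π / 2 ^ (k+3) ≤ π / 4 := le_of_lt (hsmall (k+3) (by omega))
        have : Real.arctan 0 ≤ Real.arctan (c (k+1)) := by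
          rw [Real.arctan_zero, harc']; linarith
        exact Real.arctan_strictMono.le_iff_le.mp this
      · have : Real.arctan (c (k+1)) < Real.arctan 1 := by
          rw [harc', Real.arctan_one]
          have := hang (k+3) (by omega)
          linarith [this.1]
        exact Real.arctan_strictMono.lt_iff_lt.mp this
-- main
  intro k hk
  refine ⟨π / 2 ^ (k + 2), ?_, ?_⟩
  · have hfun : (fun l : ℕ => Real.arctan (b (k + 1 + l)))
        = fun l : ℕ => (π / 2 ^ (k + 2)) / 2 / 2 ^ l := by
      funext l
      rw [hB (k + 1 + l) (by omega)]
      rw [show k + 1 + l + 2 = (k + 2) + 1 + l by ring]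
      rw [pow_add, pow_succ]
      field_simp
    rw [hfun]
    exact hasSum_geometric_two' _
  · rw [Real.arctan_one, (hCb k hk).2.2]
    ring
end

section
/- The error terms ε_k = 1 − c_k satisfy lim_{k→∞} ε_{k+1}/ε_k = 1/2; that is, the error term decreases asymptotically by a factor of 2 at each increment of k. -/
open Real Filter Topology

lemma my_tan_add (x y : ℝ) (hx : Real.cos x ≠ 0) (hy : Real.cos y ≠ 0)
    (hxy : Real.cos (x + y) ≠ 0) :
    Real.tan (x + y) = (Real.tan x + Real.tan y) / (1 - Real.tan x * Real.tan y) := by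
  have h : Real.cos x * Real.cos y - Real.sin x * Real.sin y ≠ 0 := by
    rwa [← Real.cos_add]
  rw [Real.tan_eq_sin_div_cos, Real.tan_eq_sin_div_cos, Real.tan_eq_sin_div_cos,
    Real.sin_add, Real.cos_add]
  field_simp

lemma cospos {θ : ℝ} (h1 : 0 ≤ θ) (h2 : θ ≤ π / 4) : 0 < Real.cos θ :=
  Real.cos_pos_of_mem_Ioo ⟨by linarith [pi_pos], by linarith [pi_pos]⟩

lemma one_sub_tan_pi4_sub {θ : ℝ} (h1 : 0 < θ) (h2 : θ ≤ π / 4) :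
    1 - Real.tan (π / 4 - θ) = 2 * Real.tan θ / (1 + Real.tan θ) := by
  have hcθ : Real.cos θ ≠ 0 := (cospos h1.le h2).ne'
  have h4 : Real.cos (π / 4) ≠ 0 := (cospos (by positivity) le_rfl).ne'
  have hsum : Real.cos (π / 4 + -θ) ≠ 0 := by
    apply ne_of_gt
    apply cospos <;> [linarith; linarith]
  have ht : 0 < Real.tan θ :=
    Real.tan_pos_of_pos_of_lt_pi_div_two h1 (by linarith [pi_pos])
  have h1t : (1 : ℝ) + Real.tan θ ≠ 0 := by positivity
  have : Real.tan (π / 4 - θ) = (1 - Real.tan θ) / (1 + Real.tan θ) := by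
    rw [sub_eq_add_neg, my_tan_add _ _ h4 (by rwa [Real.cos_neg]) hsum,
      Real.tan_pi_div_four, Real.tan_neg]
    ring_nf
  rw [this]
  field_simp
  ring

noncomputable def G (θ : ℝ) : ℝ :=
  (Real.cos θ / (2 * Real.cos (θ / 2) ^ 2)) *
    ((1 + Real.tan θ) / (1 + Real.tan (θ / 2)))

lemma ratio_eq {θ : ℝ} (h1 : 0 < θ) (h2 : θ ≤ π / 8) :
    (1 - Real.tan (π / 4 - θ / 2)) / (1 - Real.tan (π / 4 - θ)) = G θ := by
  have hpi := pi_pos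
  have hcθ : (0:ℝ) < Real.cos θ := cospos h1.le (by linarith)
  have hch : (0:ℝ) < Real.cos (θ / 2) := cospos (by linarith) (by linarith)
  have hsh : (0:ℝ) < Real.sin (θ / 2) :=
    Real.sin_pos_of_pos_of_lt_pi (by linarith) (by linarith)
  have ht : 0 < Real.tan θ :=
    Real.tan_pos_of_pos_of_lt_pi_div_two h1 (by linarith)
  have ts : 0 < Real.tan (θ / 2) :=
    Real.tan_pos_of_pos_of_lt_pi_div_two (by linarith) (by linarith)
  rw [one_sub_tan_pi4_sub h1 (by linarith),
      one_sub_tan_pi4_sub (by linarith : (0:ℝ) < θ/2) (by linarith)]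
  have hs2 : Real.sin θ = 2 * Real.sin (θ / 2) * Real.cos (θ / 2) := by
    have h := Real.sin_two_mul (θ / 2)
    rwa [show 2 * (θ / 2) = θ by ring] at h
  unfold G
  rw [Real.tan_eq_sin_div_cos θ, Real.tan_eq_sin_div_cos (θ / 2), hs2]
  have h1t : (0:ℝ) < 1 + Real.sin (θ/2) / Real.cos (θ/2) := by
    have := Real.tan_eq_sin_div_cos (θ/2) ▸ ts; linarith
  have h2t : (0:ℝ) < 1 + 2 * Real.sin (θ/2) * Real.cos (θ/2) / Real.cos θ := by
    have := (Real.tan_eq_sin_div_cos θ ▸ ht); rw [hs2] at this; linarith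
  field_simp

lemma akey {x : ℝ} (h1 : 0 ≤ x) (h2 : x ≤ π) :
    Real.sqrt (2 + 2 * Real.cos x) = 2 * Real.cos (x / 2) := by
  have h4 : Real.sqrt 4 = 2 := by
    rw [show (4:ℝ) = 2 ^ 2 by norm_num, Real.sqrt_sq (by norm_num : (0:ℝ) ≤ 2)]
  rw [Real.cos_half (by linarith) h2,
    show (2:ℝ) + 2 * Real.cos x = 4 * ((1 + Real.cos x) / 2) by ring,
    Real.sqrt_mul (by norm_num : (0:ℝ) ≤ 4), h4]

lemma bkey {x : ℝ} (h1 : 0 ≤ x) (h2 : x ≤ π) :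
    Real.sqrt (2 - 2 * Real.cos x) = 2 * Real.sin (x / 2) := by
  have h4 : Real.sqrt 4 = 2 := by
    rw [show (4:ℝ) = 2 ^ 2 by norm_num, Real.sqrt_sq (by norm_num : (0:ℝ) ≤ 2)]
  rw [Real.sin_half_eq_sqrt h1 (by linarith [pi_pos]),
    show (2:ℝ) - 2 * Real.cos x = 4 * ((1 - Real.cos x) / 2) by ring,
    Real.sqrt_mul (by norm_num : (0:ℝ) ≤ 4), h4]

lemma theta_pos (k : ℕ) : 0 < π / 2 ^ (k + 2) := by positivity

lemma theta_le (k : ℕ) (hk : 1 ≤ k) : π / 2 ^ (k + 2) ≤ π / 8 := by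
  apply div_le_div_of_nonneg_left pi_pos.le (by norm_num)
  calc (8:ℝ) = 2 ^ 3 := by norm_num
  _ ≤ 2 ^ (k+2) := by
      apply pow_le_pow_right₀ (by norm_num)
      omega

lemma theta_half (k : ℕ) : π / 2 ^ (k + 1 + 2) = (π / 2 ^ (k + 2)) / 2 := by
  rw [show k + 1 + 2 = (k + 2) + 1 by ring, pow_succ]
  ring

theorem error_ratio_tendsto_half (a : ℕ → ℝ)
    (ha1 : a 1 = Real.sqrt 2)
    (ha : ∀ k ≥ 1, a (k + 1) = Real.sqrt (2 + a k))
    (b : ℕ → ℝ)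
    (hb : ∀ k ≥ 1, b k = Real.sqrt (2 - a k) / a (k + 1))
    (c : ℕ → ℝ)
    (hc1 : c 1 = b 1)
    (hc : ∀ k ≥ 1, c (k + 1) = (c k + b (k + 1)) / (1 - c k * b (k + 1))) :
    Tendsto (fun k : ℕ => (1 - c (k + 1)) / (1 - c k)) atTop (𝓝 (1 / 2)) := by
  have hpi := pi_pos
  have hxb : ∀ k : ℕ, 0 < π / 2 ^ (k + 1) ∧ π / 2 ^ (k + 1) ≤ π := by
    intro k
    constructor
    · positivity
    · exact div_le_self pi_pos.le (one_le_pow₀ (by norm_num : (1:ℝ) ≤ 2))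
  -- closed form for a
  have ha' : ∀ k, 1 ≤ k → a k = 2 * Real.cos (π / 2 ^ (k + 1)) := by
    intro k hk
    induction k, hk using Nat.le_induction with
    | base =>
      rw [ha1, show (1:ℕ) + 1 = 2 by rfl, show π / 2 ^ 2 = π / 4 by norm_num,
        Real.cos_pi_div_four]
      ring
    | succ n hn ih =>
      obtain ⟨hx1, hx2⟩ := hxb n
      rw [ha n hn, ih, show (2:ℝ) + 2 * Real.cos (π / 2 ^ (n+1)) =
        2 + 2 * Real.cos (π / 2 ^ (n+1)) by ring, akey hx1.le hx2,
        show π / 2 ^ (n+1+1) = π / 2 ^ (n+1) / 2 by rw [pow_succ]; ring]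
  -- closed form for b
  have hb' : ∀ k, 1 ≤ k → b k = Real.tan (π / 2 ^ (k + 2)) := by
    intro k hk
    obtain ⟨hx1, hx2⟩ := hxb k
    have hch : 0 < Real.cos (π / 2 ^ (k+1) / 2) := by
      apply cospos (by positivity)
      calc π / 2 ^ (k+1) / 2 ≤ π / 2 ^ 2 / 2 := by
            apply div_le_div_of_nonneg_right _ (by norm_num)
            apply div_le_div_of_nonneg_left pi_pos.le (by positivity)
            apply pow_le_pow_right₀ (by norm_num)
            omega
      _ ≤ π / 4 := by rw [show π / 2 ^ 2 / 2 = π / 8 by ring]; linarith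
    rw [hb k hk, ha' k hk, ha' (k+1) (by omega), bkey hx1.le hx2,
      show π / 2 ^ (k+1+1) = π / 2 ^ (k+1) / 2 by rw [pow_succ]; ring,
      Real.tan_eq_sin_div_cos]
    rw [mul_div_mul_left _ _ (two_ne_zero (α := ℝ))]
  -- closed form for c
  have hc' : ∀ k, 1 ≤ k → c k = Real.tan (π / 4 - π / 2 ^ (k + 2)) := by
    intro k hk
    induction k, hk using Nat.le_induction with
    | base =>
      rw [hc1, hb' 1 le_rfl]
      congr 1
      ring
    | succ n hn ih =>
      have hθp := theta_pos n
      have hθl := theta_le n hn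
      set θ := π / 2 ^ (n + 2) with hθ
      have hhalf : π / 2 ^ (n + 1 + 2) = θ / 2 := theta_half n
      have hu1 : (0:ℝ) ≤ π / 4 - θ := by linarith
      have hu2 : π / 4 - θ ≤ π / 4 := by linarith
      have hcu : Real.cos (π / 4 - θ) ≠ 0 := (cospos hu1 hu2).ne'
      have hcv : Real.cos (θ / 2) ≠ 0 := (cospos (by linarith) (by linarith)).ne'
      have hcs : Real.cos ((π / 4 - θ) + θ / 2) ≠ 0 := by
        apply ne_of_gt; apply cospos <;> [linarith; linarith]
      rw [hc n hn, ih, hb' (n+1) (by omega), hhalf,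
        ← my_tan_add _ _ hcu hcv hcs]
      congr 1
      ring
  -- the eventual equality
  have hev : (fun k : ℕ => (1 - c (k + 1)) / (1 - c k)) =ᶠ[atTop]
      fun k => G (π / 2 ^ (k + 2)) := by
    filter_upwards [eventually_ge_atTop 1] with k hk
    rw [hc' k hk, hc' (k+1) (by omega), theta_half,
      ratio_eq (theta_pos k) (theta_le k hk)]
  -- the angle tends to zero
  have hθ0 : Tendsto (fun k : ℕ => π / 2 ^ (k + 2)) atTop (𝓝 0) := by
    have h : Tendsto (fun n : ℕ => π * (1/2 : ℝ) ^ n) atTop (𝓝 (π * 0)) :=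
      tendsto_const_nhds.mul
        (tendsto_pow_atTop_nhds_zero_of_lt_one (by norm_num) (by norm_num))
    rw [mul_zero] at h
    have h2 := h.comp (tendsto_add_atTop_nat 2)
    convert h2 using 2 with k
    simp [Function.comp, div_pow]
    ring
  -- continuity of G at 0
  have hG : ContinuousAt G 0 := by
    have htan : ContinuousAt Real.tan 0 :=
      Real.continuousAt_tan.mpr (by simp)
    have htan2 : ContinuousAt (fun θ : ℝ => Real.tan (θ / 2)) 0 := by
      exact ContinuousAt.comp (g := Real.tan) (f := fun θ : ℝ => θ / 2) (x := (0:ℝ))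
        (by simpa using htan) ((continuous_id.div_const 2).continuousAt)
    unfold G
    apply ContinuousAt.mul
    · apply ContinuousAt.div
      · exact Real.continuous_cos.continuousAt
      · fun_prop
      · simp
    · apply ContinuousAt.div
      · exact continuousAt_const.add htan
      · exact continuousAt_const.add htan2
      · simp
  have hG0 : G 0 = 1/2 := by
    unfold G
    simp
  have hcomp : Tendsto (fun k : ℕ => G (π / 2 ^ (k + 2))) atTop (𝓝 (1/2)) := by
    have := hG.tendsto.comp hθ0
    rw [hG0] at this
    exact this
  exact hcomp.congr' hev.symm
end

section
/- Viète's formula holds: the infinite product ∏_{k=1}^{∞} (a_k / 2) converges to 2/π. -/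
/-!
Iterating `sin (2 y) = 2 sin y cos y` gives `(∏_{k=1}^n cos (x / 2^k)) · sinc (x / 2^n) = sinc x`,
and `sinc (x / 2^n) → sinc 0 = 1` by continuity, so Euler's product `∏_{k ≥ 1} cos (x / 2^k)`
converges to `sinc x`. The half-angle formula gives `a k / 2 = cos (π / 2^(k+1))`, so Viète's
product is Euler's at `x = π / 2`, where `sinc (π / 2) = 2 / π`.
-/

open Real Filter Topology

theorem Real.prod_cos_div_two_pow_mul_sinc (x : ℝ) (n : ℕ) :
    (∏ k ∈ Finset.Icc 1 n, cos (x / 2 ^ k)) * sinc (x / 2 ^ n) = sinc x := by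
  induction n with
  | zero => simp
  | succ n ih =>
    rw [← ih, Finset.prod_Icc_succ_top (by omega), mul_assoc]
    congr 1
    rcases eq_or_ne x 0 with rfl | hx
    · simp
    have hy : x / 2 ^ (n + 1) ≠ 0 := by positivity
    have hhalf : x / 2 ^ n = 2 * (x / 2 ^ (n + 1)) := by rw [pow_succ]; field_simp
    rw [sinc_of_ne_zero hy, sinc_of_ne_zero (by positivity), hhalf, sin_two_mul]
    field_simp

theorem Real.tendsto_prod_cos_div_two_pow (x : ℝ) :
    Tendsto (fun n : ℕ => ∏ k ∈ Finset.Icc 1 n, cos (x / 2 ^ k)) atTop (𝓝 (sinc x)) := by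
  have hsinc : Tendsto (fun n : ℕ => sinc (x / 2 ^ n)) atTop (𝓝 1) := by
    have h : Tendsto (fun n : ℕ => x / 2 ^ n) atTop (𝓝 0) :=
      tendsto_const_nhds.div_atTop (tendsto_pow_atTop_atTop_of_one_lt one_lt_two)
    rw [← sinc_zero]
    exact (continuous_sinc.tendsto 0).comp h
  have hquot : Tendsto (fun n : ℕ => sinc x / sinc (x / 2 ^ n)) atTop (𝓝 (sinc x / 1)) :=
    tendsto_const_nhds.div hsinc one_ne_zero
  rw [div_one] at hquot
  refine hquot.congr' ?_
  filter_upwards [hsinc.eventually_ne one_ne_zero] with n hn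
  rw [← prod_cos_div_two_pow_mul_sinc x n, mul_div_cancel_right₀ _ hn]

theorem eq_sqrtTwoAddSeries_of_recursion (a : ℕ → ℝ) (ha1 : a 1 = √2)
    (ha : ∀ k ≥ 1, a (k + 1) = √(2 + a k)) {k : ℕ} (hk : 1 ≤ k) :
    a k = sqrtTwoAddSeries 0 k := by
  induction k, hk using Nat.le_induction with
  | base => rw [ha1, sqrtTwoAddSeries_one]
  | succ k hk ih => rw [ha k hk, ih, sqrtTwoAddSeries]

theorem viete_product_formula (a : ℕ → ℝ)
    (ha1 : a 1 = Real.sqrt 2)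
    (ha : ∀ k ≥ 1, a (k + 1) = Real.sqrt (2 + a k)) :
    Tendsto (fun K : ℕ => ∏ k ∈ Finset.Icc 1 K, a k / 2) atTop (𝓝 (2 / π)) := by
  have hlim : sinc (π / 2) = 2 / π := by
    rw [sinc_of_ne_zero (by positivity), sin_pi_div_two, one_div_div]
  rw [← hlim]
  refine (tendsto_prod_cos_div_two_pow (π / 2)).congr fun K =>
    Finset.prod_congr rfl fun k hk => ?_
  rw [eq_sqrtTwoAddSeries_of_recursion a ha1 ha (Finset.mem_Icc.mp hk).1, ← cos_pi_over_two_pow,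
    pow_succ', div_mul_eq_div_div]
end
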